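/- Let α > 1 and β > 0 be real numbers, let μ be the Möbius function, and for a natural number k set c_k(α,β) := ∑_{n=1}^∞ μ(n)/n^α (1 - 1/n^β)^k and ĉ_k(α,β) := ∑_{n=1}^∞ μ(n)/n^α exp(-k/n^β). Then there exists a constant C > 0 such that for all natural numbers k ≥ 1, |ĉ_k(α,β) - c_k(α,β)| ≤ C · k^{-(α+β-1)/β}. -/

import Mathlib

/-!
Put `x = n ^ (-β) ∈ (0, 1]`. Then `exp (-k x) - (1 - x) ^ k` is a difference of `k`-th powers
of `exp (-x)` and `1 - x`, which differ by at most `x ^ 2`; so the `n`-th terms of the two series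
differ by `O(k n ^ (-(α + 2β)) exp (-k / n ^ β))`. In the sum of these bounds, the terms with
`n ≤ k ^ (1 / β)` are controlled by `exp (-u) ≤ M! / u ^ M` with `β M ≥ α + 2β`, the remaining ones
by `exp (-u) ≤ 1` and the integral test; both parts are `O(k ^ (1 - (α + 2β - 1) / β))`.
-/

open Real Set
open scoped Nat

lemma abs_exp_neg_mul_sub_one_sub_pow_le {x : ℝ} (hx₀ : 0 ≤ x) (hx₁ : x ≤ 1) (k : ℕ) :
    |exp (-(k * x)) - (1 - x) ^ k| ≤ exp 1 * k * x ^ 2 * exp (-(k * x)) := by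
  rcases k with _ | j
  · simp
  have hmax : max |exp (-x)| |1 - x| = exp (-x) := by
    rw [abs_of_pos (exp_pos _), abs_of_nonneg (by linarith)]
    exact max_eq_left (one_sub_le_exp_neg x)
  have hquad : |exp (-x) - (1 - x)| ≤ x ^ 2 := by
    have := abs_exp_sub_one_sub_id_le (x := -x) (by rwa [abs_neg, abs_of_nonneg hx₀])
    rwa [neg_sq, sub_neg_eq_add, sub_add] at this
  -- `exp (-x) ^ j = exp x * exp (-(j + 1) x)` and `exp x ≤ exp 1`
  have hpow : exp (-x) ^ j ≤ exp 1 * exp (-((j + 1 : ℕ) * x)) := by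
    rw [← exp_nat_mul, ← exp_add]
    exact exp_le_exp.2 (by push_cast; nlinarith)
  calc |exp (-((j + 1 : ℕ) * x)) - (1 - x) ^ (j + 1)|
      = |exp (-x) ^ (j + 1) - (1 - x) ^ (j + 1)| := by rw [← exp_nat_mul, mul_neg]
    _ ≤ |exp (-x) - (1 - x)| * (j + 1 : ℕ) * max |exp (-x)| |1 - x| ^ j := abs_pow_sub_pow_le ..
    _ ≤ x ^ 2 * (j + 1 : ℕ) * (exp 1 * exp (-((j + 1 : ℕ) * x))) := by
        rw [hmax]; gcongr
    _ = exp 1 * (j + 1 : ℕ) * x ^ 2 * exp (-((j + 1 : ℕ) * x)) := by ring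

lemma exp_neg_le_factorial_div_pow {u : ℝ} (hu : 0 < u) (M : ℕ) : exp (-u) ≤ M ! / u ^ M := by
  rw [exp_neg, inv_le_comm₀ (exp_pos u) (by positivity), inv_div]
  exact pow_div_factorial_le_exp u hu.le M

lemma mul_rpow_neg_mul_exp_neg_div_le {t x : ℝ} (ht : 0 < t) (hx : 0 < x) (s β : ℝ) (M : ℕ) :
    t * x ^ (-s) * exp (-t / x ^ β) ≤ M ! * t ^ (1 - (M : ℝ)) * x ^ (β * M - s) := by
  calc t * x ^ (-s) * exp (-t / x ^ β)
      ≤ t * x ^ (-s) * (M ! / (t / x ^ β) ^ M) := by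
        rw [neg_div]; gcongr; exact exp_neg_le_factorial_div_pow (by positivity) M
    _ = M ! * t ^ (1 - (M : ℝ)) * x ^ (β * M - s) := by
        rw [rpow_sub ht, rpow_one, rpow_natCast, sub_eq_add_neg, rpow_add hx, rpow_mul hx.le,
          rpow_natCast, div_pow]
        field_simp

lemma tsum_rpow_neg_nat_add_le {s : ℝ} (hs : 1 < s) {N : ℕ} (hN : 0 < N) :
    ∑' n : ℕ, ((n + N + 1 : ℕ) : ℝ) ^ (-s) ≤ (N : ℝ) ^ (1 - s) / (s - 1) := by
  have hN' : (0 : ℝ) < N := by exact_mod_cast hN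
  have hanti : AntitoneOn (fun x : ℝ => x ^ (-s)) (Ici (N : ℝ)) := fun a ha b _ hab =>
    rpow_le_rpow_of_nonpos (hN'.trans_le ha) hab (by linarith)
  calc ∑' n : ℕ, ((n + N + 1 : ℕ) : ℝ) ^ (-s) ≤ ∫ x in Ioi (N : ℝ), x ^ (-s) :=
        hanti.tsum_comp_add_le_integral N (integrableOn_Ioi_rpow_of_lt (by linarith) hN')
          fun x hx => (rpow_pos_of_pos (hN'.trans hx) _).le
    _ = (N : ℝ) ^ (1 - s) / (s - 1) := by
        rw [integral_Ioi_rpow_of_lt (by linarith) hN', ← neg_div_neg_eq, neg_neg]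
        ring_nf

lemma exp_neg_div_le_one {t y : ℝ} (ht : 0 ≤ t) (hy : 0 ≤ y) : exp (-t / y) ≤ 1 :=
  exp_le_one_iff.2 (div_nonpos_of_nonpos_of_nonneg (neg_nonpos.2 ht) hy)

lemma mul_rpow_neg_mul_exp_neg_div_le_mul_rpow_neg {t : ℝ} (ht : 0 ≤ t) (x s β : ℝ) (hx : 0 ≤ x) :
    t * x ^ (-s) * exp (-t / x ^ β) ≤ t * x ^ (-s) :=
  mul_le_of_le_one_right (by positivity) (exp_neg_div_le_one ht (by positivity))

lemma summable_mul_rpow_neg_mul_exp_neg_div {s : ℝ} (hs : 1 < s) {t : ℝ} (ht : 0 ≤ t) (β : ℝ) :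
    Summable fun n : ℕ => t * (n : ℝ) ^ (-s) * exp (-t / (n : ℝ) ^ β) :=
  .of_nonneg_of_le (fun n => by positivity)
    (fun n => mul_rpow_neg_mul_exp_neg_div_le_mul_rpow_neg ht _ s β n.cast_nonneg)
    ((summable_nat_rpow.2 (by linarith)).mul_left t)

lemma sum_range_mul_rpow_neg_mul_exp_neg_div_le {s β t : ℝ} (hs : 0 < s) (ht : 0 < t) {M : ℕ}
    (hM : s ≤ β * M) (N : ℕ) :
    ∑ n ∈ Finset.range (N + 1), t * (n : ℝ) ^ (-s) * exp (-t / (n : ℝ) ^ β) ≤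
      (N + 1) * M ! * t ^ (1 - (M : ℝ)) * (N : ℝ) ^ (β * M - s) := by
  calc ∑ n ∈ Finset.range (N + 1), t * (n : ℝ) ^ (-s) * exp (-t / (n : ℝ) ^ β)
      ≤ ∑ n ∈ Finset.range (N + 1), M ! * t ^ (1 - (M : ℝ)) * (N : ℝ) ^ (β * M - s) := by
        refine Finset.sum_le_sum fun n hn => ?_
        rcases n.eq_zero_or_pos with rfl | hn₀
        · simp only [Nat.cast_zero, zero_rpow (neg_ne_zero.2 hs.ne'), mul_zero, zero_mul]
          positivity
        · refine (mul_rpow_neg_mul_exp_neg_div_le ht (by positivity) s β M).trans ?_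
          gcongr
          exact Finset.mem_range_succ_iff.1 hn
    _ = (N + 1) * M ! * t ^ (1 - (M : ℝ)) * (N : ℝ) ^ (β * M - s) := by simp; ring

lemma tsum_nat_add_mul_rpow_neg_mul_exp_neg_div_le {s : ℝ} (hs : 1 < s) {t : ℝ} (ht : 0 ≤ t)
    (β : ℝ) {N : ℕ} (hN : 0 < N) :
    ∑' n : ℕ, t * ((n + (N + 1) : ℕ) : ℝ) ^ (-s) * exp (-t / ((n + (N + 1) : ℕ) : ℝ) ^ β) ≤
      t * ((N : ℝ) ^ (1 - s) / (s - 1)) :=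
  calc ∑' n : ℕ, t * ((n + (N + 1) : ℕ) : ℝ) ^ (-s) * exp (-t / ((n + (N + 1) : ℕ) : ℝ) ^ β)
      ≤ ∑' n : ℕ, t * ((n + N + 1 : ℕ) : ℝ) ^ (-s) :=
        Summable.tsum_le_tsum
          (fun n => mul_rpow_neg_mul_exp_neg_div_le_mul_rpow_neg ht _ s β (Nat.cast_nonneg _))
          ((summable_nat_add_iff (N + 1)).2 (summable_mul_rpow_neg_mul_exp_neg_div hs ht β))
          (((summable_nat_add_iff (N + 1)).2 (summable_nat_rpow.2 (by linarith))).mul_left t)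
    _ = t * ∑' n : ℕ, ((n + N + 1 : ℕ) : ℝ) ^ (-s) := tsum_mul_left
    _ ≤ t * ((N : ℝ) ^ (1 - s) / (s - 1)) := by gcongr; exact tsum_rpow_neg_nat_add_le hs hN

lemma exists_tsum_mul_rpow_neg_mul_exp_neg_div_le {s β : ℝ} (hs : 1 < s) (hβ : 0 < β) :
    ∃ C > 0, ∀ t : ℝ, 1 ≤ t →
      ∑' n : ℕ, t * (n : ℝ) ^ (-s) * exp (-t / (n : ℝ) ^ β) ≤ C * t ^ (1 - (s - 1) / β) := by
  set M : ℕ := ⌈s / β⌉₊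
  have hM : s ≤ β * M := by
    have := Nat.le_ceil (s / β)
    rw [div_le_iff₀ hβ] at this
    linarith
  have hs₁ : 0 < s - 1 := by linarith
  refine ⟨3 * M ! * 2 ^ (β * M - s) + 1 / (s - 1), by positivity, fun t ht => ?_⟩
  have ht₀ : 0 < t := by linarith
  -- split the series at `N = ⌈t ^ (1 / β)⌉`, where `t / n ^ β` crosses `1`
  set T := t ^ β⁻¹
  have hT : 1 ≤ T := one_le_rpow ht (inv_nonneg.2 hβ.le)
  have hpow (a b : ℝ) : t ^ a * T ^ b = t ^ (a + b / β) := by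
    rw [← rpow_mul ht₀.le, ← rpow_add ht₀, div_eq_inv_mul]
  set N := ⌈T⌉₊
  have hTN : T ≤ N := Nat.le_ceil T
  have hNT : (N : ℝ) < T + 1 := Nat.ceil_lt_add_one (by linarith)
  have hhead :=
    calc (N + 1) * M ! * t ^ (1 - (M : ℝ)) * (N : ℝ) ^ (β * M - s)
        ≤ (3 * T) * M ! * t ^ (1 - (M : ℝ)) * (2 * T) ^ (β * M - s) := by
          gcongr
          · linarith
          · linarith
      _ = 3 * M ! * 2 ^ (β * M - s) * t ^ (1 - (s - 1) / β) := by
          have : t ^ (1 - (M : ℝ)) * T ^ (β * M - s + 1) = t ^ (1 - (s - 1) / β) := by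
            rw [hpow]; congr 1; field_simp; ring
          rw [mul_rpow zero_le_two (by linarith), ← this, rpow_add_one (by positivity)]
          ring
  have htail :=
    calc t * ((N : ℝ) ^ (1 - s) / (s - 1)) ≤ t * (T ^ (1 - s) / (s - 1)) := by
          have := rpow_le_rpow_of_nonpos (zero_lt_one.trans_le hT) hTN (by linarith : 1 - s ≤ 0)
          gcongr
      _ = 1 / (s - 1) * (t ^ (1 : ℝ) * T ^ (1 - s)) := by rw [rpow_one]; ring
      _ = 1 / (s - 1) * t ^ (1 - (s - 1) / β) := by rw [hpow]; ring_nf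
  calc ∑' n : ℕ, t * (n : ℝ) ^ (-s) * exp (-t / (n : ℝ) ^ β)
      = ∑ n ∈ Finset.range (N + 1), t * (n : ℝ) ^ (-s) * exp (-t / (n : ℝ) ^ β) +
          ∑' n : ℕ, t * ((n + (N + 1) : ℕ) : ℝ) ^ (-s) * exp (-t / ((n + (N + 1) : ℕ) : ℝ) ^ β) :=
        ((summable_mul_rpow_neg_mul_exp_neg_div hs ht₀.le β).sum_add_tsum_nat_add _).symm
    _ ≤ _ := by
        rw [add_mul]
        exact add_le_add
          ((sum_range_mul_rpow_neg_mul_exp_neg_div_le (by linarith) ht₀ hM N).trans hhead)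
          ((tsum_nat_add_mul_rpow_neg_mul_exp_neg_div_le hs ht₀.le β
            (Nat.ceil_pos.2 (by linarith))).trans htail)

lemma abs_div_rpow_mul_exp_sub_div_rpow_mul_pow_le {c x : ℝ} (hc : |c| ≤ 1) (hx : 1 ≤ x) (α : ℝ)
    {β : ℝ} (hβ : 0 ≤ β) (k : ℕ) :
    |c / x ^ α * exp (-(k : ℝ) / x ^ β) - c / x ^ α * (1 - 1 / x ^ β) ^ k| ≤
      exp 1 * (k * x ^ (-(α + 2 * β)) * exp (-(k : ℝ) / x ^ β)) := by
  have hx₀ : 0 < x := by linarith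
  set y := 1 / x ^ β
  have hy₀ : 0 ≤ y := by positivity
  have hy₁ : y ≤ 1 := div_le_one_of_le₀ (one_le_rpow hx hβ) (by positivity)
  have hexp : -(k : ℝ) / x ^ β = -(k * y) := by rw [neg_div, mul_one_div]
  have hrpow : x ^ (-(α + 2 * β)) = 1 / x ^ α * y ^ 2 := by
    have h2β : x ^ (2 * β) = (x ^ β) ^ 2 := by rw [mul_comm, rpow_mul hx₀.le, rpow_two]
    rw [rpow_neg hx₀.le, rpow_add hx₀, h2β, div_pow, one_pow, one_div_mul_one_div, one_div]
  rw [← mul_sub, abs_mul, hexp, hrpow]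
  calc |c / x ^ α| * |exp (-(k * y)) - (1 - y) ^ k|
      ≤ 1 / x ^ α * (exp 1 * k * y ^ 2 * exp (-(k * y))) := by
        gcongr
        · rw [abs_div, abs_of_pos (rpow_pos_of_pos hx₀ α)]
          gcongr
        · exact abs_exp_neg_mul_sub_one_sub_pow_le hy₀ hy₁ k
    _ = exp 1 * (k * (1 / x ^ α * y ^ 2) * exp (-(k * y))) := by ring

lemma abs_one_sub_pow_le_one {y : ℝ} (hy₀ : 0 ≤ y) (hy₁ : y ≤ 1) (k : ℕ) : |(1 - y) ^ k| ≤ 1 := by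
  rw [abs_pow, abs_of_nonneg (by linarith)]
  exact pow_le_one₀ (by linarith) (by linarith)

lemma summable_div_rpow_mul {α : ℝ} (hα : 1 < α) {c w : ℕ+ → ℝ} (hc : ∀ n, |c n| ≤ 1)
    (hw : ∀ n, |w n| ≤ 1) : Summable fun n : ℕ+ => c n / (n : ℝ) ^ α * w n := by
  refine .of_norm_bounded ((summable_nat_rpow.2 (by linarith : -α < -1)).comp_injective
    PNat.coe_injective) fun n => ?_
  have hn : (0 : ℝ) < n := Nat.cast_pos.2 n.pos
  rw [Real.norm_eq_abs, abs_mul, abs_div, abs_of_pos (rpow_pos_of_pos hn α), Function.comp_apply,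
    rpow_neg hn.le, ← one_div]
  calc |c n| / (n : ℝ) ^ α * |w n| ≤ 1 / (n : ℝ) ^ α * 1 := by gcongr <;> simp [hc, hw]
    _ = 1 / (n : ℝ) ^ α := mul_one _

open ArithmeticFunction ArithmeticFunction.Moebius in
theorem baezDuarte_fluctuation (α β : ℝ) (hα : 1 < α) (hβ : 0 < β) :
    ∃ C : ℝ, 0 < C ∧ ∀ k : ℕ, 1 ≤ k →
      |(∑' n : ℕ+, (μ (n : ℕ) : ℝ) / (n : ℝ) ^ α * Real.exp (-(k : ℝ) / (n : ℝ) ^ β)) -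
          ∑' n : ℕ+, (μ (n : ℕ) : ℝ) / (n : ℝ) ^ α * (1 - 1 / (n : ℝ) ^ β) ^ k| ≤
        C * (k : ℝ) ^ (-(α + β - 1) / β) := by
  obtain ⟨C, hC, hsum⟩ :=
    exists_tsum_mul_rpow_neg_mul_exp_neg_div_le (s := α + 2 * β) (by linarith) hβ
  refine ⟨exp 1 * C, by positivity, fun k hk => ?_⟩
  have hμ (n : ℕ+) : |(μ (n : ℕ) : ℝ)| ≤ 1 := mod_cast abs_moebius_le_one
  have hn (n : ℕ+) : (1 : ℝ) ≤ n := Nat.one_le_cast.2 n.pos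
  have hexp (n : ℕ+) : |exp (-(k : ℝ) / (n : ℝ) ^ β)| ≤ 1 := by
    rw [abs_of_pos (exp_pos _)]
    exact exp_neg_div_le_one k.cast_nonneg (by positivity)
  have hpow (n : ℕ+) : |(1 - 1 / (n : ℝ) ^ β) ^ k| ≤ 1 :=
    abs_one_sub_pow_le_one (by positivity)
      (div_le_one_of_le₀ (one_le_rpow (hn n) hβ.le) (by positivity)) k
  set g : ℕ → ℝ := fun n => k * (n : ℝ) ^ (-(α + 2 * β)) * exp (-(k : ℝ) / (n : ℝ) ^ β)
  have hg : Summable g := summable_mul_rpow_neg_mul_exp_neg_div (by linarith) k.cast_nonneg β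
  rw [← (summable_div_rpow_mul hα hμ hexp).tsum_sub (summable_div_rpow_mul hα hμ hpow)]
  calc _ ≤ ∑' n : ℕ+, exp 1 * g n := by
        rw [← Real.norm_eq_abs]
        exact tsum_of_norm_bounded
          ((hg.comp_injective PNat.coe_injective).mul_left _).hasSum fun n =>
          abs_div_rpow_mul_exp_sub_div_rpow_mul_pow_le (hμ n) (hn n) α hβ.le k
    _ = exp 1 * ∑' n : ℕ+, g n := tsum_mul_left
    _ ≤ exp 1 * ∑' n : ℕ, g n := by
        gcongr
        exact tsum_comp_le_tsum_of_inj hg (fun n => by positivity) PNat.coe_injective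
    _ ≤ exp 1 * (C * (k : ℝ) ^ (1 - (α + 2 * β - 1) / β)) := by
        gcongr
        exact hsum k (mod_cast hk)
    _ = exp 1 * C * (k : ℝ) ^ (-(α + β - 1) / β) := by
        rw [← mul_assoc]
        congr 2
        field_simp
        ring
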